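/- arXiv:1404.3120 — 2 statements merged into one kernel-verified Lean document; each statement's English description precedes it below -/
import Mathlib

section
/- Landau–Toeplitz Theorem for the slice 3-diameter (inequality part): Let f(q) = ∑_{n≥0} q^n a_n be a slice regular function on 𝔹 such that d̂₃(f(𝔹)) = d₃(𝔹) = √3. Then d̂₃(f(r𝔹)) ≤ √3·r for every r ∈ (0,1), and |a₁| ≤ 1 (i.e. |∂_c f(0)| ≤ 1). -/
noncomputable section

open Filter Metric Set

local notation "ℍ" => Quaternion ℝ

/-- The slice (complex plane) `L_I = ℝ + ℝI` through an imaginary unit `I`. -/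
def sliceL (I : ℍ) : Set ℍ := {z : ℍ | ∃ x y : ℝ, z = (x : ℍ) + y • I}

open Classical in
/-- The normalized coefficients `b_n = a_n a_N⁻¹ |a_N|`, where `a_N` is the first
nonvanishing coefficient (and `b ≡ 0` if all coefficients vanish). -/
def bseq (a : ℕ → ℍ) : ℕ → ℍ :=
  if h : ∃ N, a N ≠ 0 then
    fun n => a n * (a (Nat.find h))⁻¹ * ((‖a (Nat.find h)‖ : ℝ) : ℍ)
  else fun _ => 0

/-- The `n`-th power series coefficient of
`ĝ_{w₁,w₂,w₃}(z) = ∑ zⁿ ∑_{k=0}^n ∑_{j=0}^k (w₂ʲ−w₁ʲ)(w₃^{k−j}−w₁^{k−j})(w₃^{n−k}−w₂^{n−k}) b_j b_{k−j} b_{n−k}`. -/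
def ghatCoeff (b : ℕ → ℍ) (w₁ w₂ w₃ : ℍ) (n : ℕ) : ℍ :=
  ∑ k ∈ Finset.range (n + 1), ∑ j ∈ Finset.range (k + 1),
    (w₂ ^ j - w₁ ^ j) * (w₃ ^ (k - j) - w₁ ^ (k - j)) * (w₃ ^ (n - k) - w₂ ^ (n - k)) *
      (b j * b (k - j) * b (n - k))

/-- The slice `3`-diameter
`d̂₃(f(r𝔹)) = sup_{I∈𝕊} max_{w₁,w₂,w₃ ∈ 𝔹̄_I} max_{z ∈ L_I, |z| ≤ r} |ĝ_{w₁,w₂,w₃}(z)|^{1/3}`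
(for constant `f` all the values `ĝ_{w₁,w₂,w₃}(z)` vanish, so `d̂₃(f(r𝔹)) = 0`). -/
def sliceD3 (a : ℕ → ℍ) (r : ℝ) : ℝ :=
  sSup {x : ℝ | ∃ I w₁ w₂ w₃ z : ℍ, I ^ 2 = -1 ∧
    w₁ ∈ sliceL I ∧ ‖w₁‖ ≤ 1 ∧ w₂ ∈ sliceL I ∧ ‖w₂‖ ≤ 1 ∧ w₃ ∈ sliceL I ∧ ‖w₃‖ ≤ 1 ∧
    z ∈ sliceL I ∧ ‖z‖ ≤ r ∧
    x = ‖∑' n : ℕ, z ^ n * ghatCoeff (bseq a) w₁ w₂ w₃ n‖ ^ ((1 : ℝ) / 3)}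

/-! For fixed `w₁, w₂, w₃` in a slice `L_I`, the function `ĝ(z) = ∑ zⁿ cₙ` has `c₀ = c₁ = c₂ = 0`.
Letting `L_I ≅ ℂ` act on `ℍ` by left multiplication turns `ℍ` into a complex Banach space in which
`ĝ(z) / z³` is a holomorphic vector-valued function of `z ∈ L_I`, so the maximum modulus principle
gives the Schwarz-type bound `ρ³ ‖ĝ(u) / u³‖ ≤ max_{|z| = ρ} ‖ĝ(z)‖` for `|u| ≤ ρ`. For
`|u| ≤ r ≤ ρ` this reads `‖ĝ(u)‖ ≤ (r / ρ)³ max_{|z| = ρ} ‖ĝ(z)‖`, so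
`d̂₃(f(r𝔹)) ≤ (r / ρ) d̂₃(f(ρ𝔹))`, and `ρ → 1` gives the first claim. Taking `u = 0`
bounds `‖c₃‖ = ‖(w₂ - w₁)(w₃ - w₁)(w₃ - w₂)‖ |a₁|³` by `(d̂₃(f(ρ𝔹)) / ρ)³ ≤ 3√3`; an equilateral
triangle inscribed in the unit circle of `L_I` has `‖(w₂ - w₁)(w₃ - w₁)(w₃ - w₂)‖ = 3√3`,
whence `|a₁| ≤ 1`. -/

theorem norm_eq_one_of_sq_eq_neg_one {𝕜 : Type*} [NormedDivisionRing 𝕜] {I : 𝕜}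
    (hI : I ^ 2 = -1) : ‖I‖ = 1 :=
  (pow_eq_one_iff_of_nonneg (norm_nonneg I) two_ne_zero).1
    (by rw [← norm_pow, hI, norm_neg, norm_one])

theorem Quaternion.re_eq_zero_of_sq_eq_neg_one {I : ℍ} (hI : I ^ 2 = -1) : I.re = 0 := by
  rw [← Quaternion.sq_eq_neg_normSq, hI, Quaternion.normSq_eq_norm_mul_self,
    norm_eq_one_of_sq_eq_neg_one hI]
  simp

def sliceEmbedding (I : ℍ) (hI : I ^ 2 = -1) : ℂ →ₐ[ℝ] ℍ :=
  Complex.liftAux I (by rwa [← sq])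

section sliceEmbedding

variable {I : ℍ} (hI : I ^ 2 = -1)

theorem sliceEmbedding_apply (w : ℂ) : sliceEmbedding I hI w = (w.re : ℍ) + w.im • I := by
  rw [sliceEmbedding, Complex.liftAux_apply, Quaternion.algebraMap_def]

theorem range_sliceEmbedding : Set.range (sliceEmbedding I hI) = sliceL I := by
  ext z
  constructor
  · rintro ⟨w, rfl⟩
    exact ⟨w.re, w.im, sliceEmbedding_apply hI w⟩
  · rintro ⟨x, y, rfl⟩
    exact ⟨⟨x, y⟩, sliceEmbedding_apply hI _⟩

theorem norm_sliceEmbedding (w : ℂ) : ‖sliceEmbedding I hI w‖ = ‖w‖ := by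
  have hre := Quaternion.re_eq_zero_of_sq_eq_neg_one hI
  have hnorm : Quaternion.normSq I = 1 := by
    rw [Quaternion.normSq_eq_norm_mul_self, norm_eq_one_of_sq_eq_neg_one hI, one_mul]
  rw [← mul_self_inj (norm_nonneg _) (norm_nonneg _), ← Quaternion.normSq_eq_norm_mul_self,
    ← sq, ← Complex.normSq_eq_norm_sq, sliceEmbedding_apply, Quaternion.normSq_add,
    Complex.normSq_apply]
  simp only [Quaternion.normSq_coe, Quaternion.normSq_smul, hnorm, Quaternion.coe_mul_eq_smul,
    Quaternion.star_smul, Quaternion.re_smul, Quaternion.re_star, hre, smul_eq_mul, mul_zero]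
  ring

end sliceEmbedding

theorem exists_mem_sliceL_norm_eq_norm_tsum_le {I : ℍ} (hI : I ^ 2 = -1) {c : ℕ → ℍ} {ρ R : ℝ}
    (hρ : 0 < ρ) (hρR : ρ < R) (hc : Summable fun n => ‖c n‖ * R ^ n) {u : ℍ}
    (hu : u ∈ sliceL I) (huρ : ‖u‖ ≤ ρ) :
    ∃ z ∈ sliceL I, ‖z‖ = ρ ∧ ‖∑' n, u ^ n * c n‖ ≤ ‖∑' n, z ^ n * c n‖ := by
  set φ := sliceEmbedding I hI
  let : Module ℂ ℍ := Module.compHom ℍ φ.toRingHom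
  have hsmul : ∀ (w : ℂ) (q : ℍ), w • q = φ w * q := fun _ _ => rfl
  let : NormedSpace ℂ ℍ :=
    { norm_smul_le := fun w q => by rw [hsmul, norm_mul, norm_sliceEmbedding] }
  let p : FormalMultilinearSeries ℂ ℂ ℍ := fun n =>
    ContinuousMultilinearMap.mkPiRing ℂ (Fin n) (c n)
  have hp : ∀ w, p.sum w = ∑' n, φ w ^ n * c n := fun w => by
    simp only [FormalMultilinearSeries.sum, p, ContinuousMultilinearMap.mkPiRing_apply,
      Finset.prod_const, Finset.card_univ, Fintype.card_fin, hsmul, map_pow]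
  have hR : ENNReal.ofReal R ≤ p.radius := by
    have hR0 : 0 ≤ R := hρ.le.trans hρR.le
    rw [ENNReal.ofReal]
    refine p.le_radius_of_summable_norm ?_
    simpa [p, ContinuousMultilinearMap.norm_mkPiRing, hR0] using hc
  have hd : DiffContOnCl ℂ p.sum (Metric.ball 0 ρ) := by
    refine DifferentiableOn.diffContOnCl ?_
    rw [closure_ball 0 hρ.ne']
    refine (p.hasFPowerSeriesOnBall ?_).differentiableOn.mono fun w hw => ?_
    · exact (ENNReal.ofReal_pos.2 (hρ.trans hρR)).trans_le hR
    · rw [Metric.mem_eball, edist_dist]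
      exact ((ENNReal.ofReal_lt_ofReal_iff (hρ.trans hρR)).2
        ((mem_closedBall.1 hw).trans_lt hρR)).trans_le hR
  obtain ⟨w', hw', hmax⟩ := Complex.exists_mem_frontier_isMaxOn_norm isBounded_ball
    (nonempty_ball.2 hρ) hd
  rw [frontier_ball 0 hρ.ne', mem_sphere_zero_iff_norm] at hw'
  rw [closure_ball 0 hρ.ne'] at hmax
  obtain ⟨w, rfl⟩ := (range_sliceEmbedding hI).symm ▸ hu
  refine ⟨φ w', range_sliceEmbedding hI ▸ Set.mem_range_self w',
    by rw [norm_sliceEmbedding, hw'], ?_⟩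
  rw [← hp, ← hp]
  exact hmax (mem_closedBall_zero_iff.2 (by rwa [← norm_sliceEmbedding hI]))

theorem summable_norm_pow_mul_of_norm_le {𝕜 : Type*} [NormedDivisionRing 𝕜] {c : ℕ → 𝕜} {R : ℝ}
    (hc : Summable fun n => ‖c n‖ * R ^ n) {z : 𝕜} (hz : ‖z‖ ≤ R) :
    Summable fun n => ‖z ^ n * c n‖ :=
  hc.of_nonneg_of_le (fun _ => norm_nonneg _) fun n => by
    rw [norm_mul, norm_pow, mul_comm]
    gcongr

theorem tsum_pow_mul_eq_pow_mul_tsum {K : Type*} [DivisionRing K] [TopologicalSpace K]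
    [IsTopologicalRing K] [T2Space K] {c : ℕ → K} {k : ℕ} (hc : ∀ n < k, c n = 0) {z : K}
    (hz : Summable fun n => z ^ n * c n) :
    ∑' n, z ^ n * c n = z ^ k * ∑' n, z ^ n * c (n + k) := by
  rw [← hz.sum_add_tsum_nat_add k, ← tsum_mul_left,
    Finset.sum_eq_zero fun n hn => by rw [hc n (Finset.mem_range.1 hn), mul_zero], zero_add]
  simp only [pow_add, pow_mul_comm z, mul_assoc]

theorem exists_mem_sliceL_norm_eq_pow_mul_norm_tsum_le {I : ℍ} (hI : I ^ 2 = -1) {c : ℕ → ℍ}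
    {k : ℕ} (hck : ∀ n < k, c n = 0) {ρ R : ℝ} (hρ : 0 < ρ) (hρR : ρ < R)
    (hc : Summable fun n => ‖c n‖ * R ^ n) {u : ℍ} (hu : u ∈ sliceL I) (huρ : ‖u‖ ≤ ρ) :
    ∃ z ∈ sliceL I, ‖z‖ = ρ ∧ ρ ^ k * ‖∑' n, u ^ n * c (n + k)‖ ≤ ‖∑' n, z ^ n * c n‖ := by
  have hR : R ≠ 0 := (hρ.trans hρR).ne'
  have hc' : Summable fun n => ‖c (n + k)‖ * R ^ n :=
    (((summable_nat_add_iff k).2 hc).div_const (R ^ k)).congr fun n => by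
      rw [pow_add]
      field_simp
  obtain ⟨z, hz, hzρ, hle⟩ := exists_mem_sliceL_norm_eq_norm_tsum_le hI hρ hρR hc' hu huρ
  refine ⟨z, hz, hzρ, ?_⟩
  have hzc := summable_norm_pow_mul_of_norm_le hc (hzρ.trans_le hρR.le)
  rw [tsum_pow_mul_eq_pow_mul_tsum hck hzc.of_norm, norm_mul, norm_pow, hzρ]
  gcongr

theorem norm_bseq (a : ℕ → ℍ) (n : ℕ) : ‖bseq a n‖ = ‖a n‖ := by
  classical
  unfold bseq
  split_ifs with h
  · have hN : ‖a (Nat.find h)‖ ≠ 0 := norm_ne_zero_iff.2 (Nat.find_spec h)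
    rw [norm_mul, norm_mul, norm_inv, Quaternion.norm_coe, norm_norm]
    field_simp
  · push Not at h
    simp [h]

theorem ghatCoeff_eq_zero_of_lt_three (b : ℕ → ℍ) (w₁ w₂ w₃ : ℍ) {n : ℕ} (hn : n < 3) :
    ghatCoeff b w₁ w₂ w₃ n = 0 := by
  interval_cases n <;> simp [ghatCoeff, Finset.sum_range_succ]

theorem ghatCoeff_three (b : ℕ → ℍ) (w₁ w₂ w₃ : ℍ) :
    ghatCoeff b w₁ w₂ w₃ 3 = (w₂ - w₁) * (w₃ - w₁) * (w₃ - w₂) * (b 1 * b 1 * b 1) := by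
  simp [ghatCoeff, Finset.sum_range_succ]

theorem norm_ghatCoeff_mul_pow_le (b : ℕ → ℍ) {w₁ w₂ w₃ : ℍ} (h₁ : ‖w₁‖ ≤ 1) (h₂ : ‖w₂‖ ≤ 1)
    (h₃ : ‖w₃‖ ≤ 1) {s : ℝ} (hs : 0 ≤ s) (n : ℕ) :
    ‖ghatCoeff b w₁ w₂ w₃ n‖ * s ^ n ≤
      8 * ∑ k ∈ Finset.range (n + 1),
        (∑ j ∈ Finset.range (k + 1), ‖b j‖ * s ^ j * (‖b (k - j)‖ * s ^ (k - j))) *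
          (‖b (n - k)‖ * s ^ (n - k)) := by
  have hdiff : ∀ {u v : ℍ}, ‖u‖ ≤ 1 → ‖v‖ ≤ 1 → ∀ m : ℕ, ‖u ^ m - v ^ m‖ ≤ 2 := fun hu hv m => by
    refine (norm_sub_le _ _).trans ?_
    rw [norm_pow, norm_pow]
    linarith [pow_le_one₀ (norm_nonneg _) hu (n := m), pow_le_one₀ (norm_nonneg _) hv (n := m)]
  refine (mul_le_mul_of_nonneg_right (norm_sum_le _ _) (pow_nonneg hs _)).trans ?_
  rw [Finset.sum_mul, Finset.mul_sum]
  refine Finset.sum_le_sum fun k hk => ?_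
  refine (mul_le_mul_of_nonneg_right (norm_sum_le _ _) (pow_nonneg hs _)).trans ?_
  rw [Finset.sum_mul, Finset.sum_mul, Finset.mul_sum]
  refine Finset.sum_le_sum fun j hj => ?_
  rw [Finset.mem_range] at hk hj
  have hsn : s ^ n = s ^ j * s ^ (k - j) * s ^ (n - k) := by
    rw [← pow_add, ← pow_add]
    congr 1
    omega
  simp only [norm_mul, hsn]
  calc _ = ‖w₂ ^ j - w₁ ^ j‖ * ‖w₃ ^ (k - j) - w₁ ^ (k - j)‖ * ‖w₃ ^ (n - k) - w₂ ^ (n - k)‖ *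
        (‖b j‖ * s ^ j * (‖b (k - j)‖ * s ^ (k - j)) * (‖b (n - k)‖ * s ^ (n - k))) := by
        ring
    _ ≤ 2 * 2 * 2 *
        (‖b j‖ * s ^ j * (‖b (k - j)‖ * s ^ (k - j)) * (‖b (n - k)‖ * s ^ (n - k))) := by
        gcongr
        · exact hdiff h₂ h₁ j
        · exact hdiff h₃ h₁ (k - j)
        · exact hdiff h₃ h₂ (n - k)
    _ = _ := by ring

theorem hasSum_sum_range_mul_of_nonneg {f g : ℕ → ℝ} (hf0 : ∀ n, 0 ≤ f n) (hg0 : ∀ n, 0 ≤ g n)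
    (hf : Summable f) (hg : Summable g) :
    HasSum (fun n => ∑ k ∈ Finset.range (n + 1), f k * g (n - k)) ((∑' n, f n) * ∑' n, g n) :=
  hasSum_sum_range_mul_of_summable_norm (by simpa only [Real.norm_of_nonneg (hf0 _)] using hf)
    (by simpa only [Real.norm_of_nonneg (hg0 _)] using hg)

theorem hasSum_triple_cauchy_product {f : ℕ → ℝ} (hf0 : ∀ n, 0 ≤ f n) (hf : Summable f) :
    HasSum (fun n => ∑ k ∈ Finset.range (n + 1),
      (∑ j ∈ Finset.range (k + 1), f j * f (k - j)) * f (n - k)) ((∑' n, f n) ^ 3) := by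
  have h2 := hasSum_sum_range_mul_of_nonneg hf0 hf0 hf hf
  rw [pow_three', ← h2.tsum_eq]
  exact hasSum_sum_range_mul_of_nonneg
    (fun n => Finset.sum_nonneg fun _ _ => mul_nonneg (hf0 _) (hf0 _)) hf0 h2.summable hf

theorem summable_norm_ghatCoeff_mul_pow {b : ℕ → ℍ} {w₁ w₂ w₃ : ℍ} (h₁ : ‖w₁‖ ≤ 1)
    (h₂ : ‖w₂‖ ≤ 1) (h₃ : ‖w₃‖ ≤ 1) {s : ℝ} (hs : 0 ≤ s) (hb : Summable fun n => ‖b n‖ * s ^ n) :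
    Summable fun n => ‖ghatCoeff b w₁ w₂ w₃ n‖ * s ^ n :=
  ((hasSum_triple_cauchy_product (fun n => by positivity) hb).summable.mul_left 8).of_nonneg_of_le
    (fun _ => by positivity) (norm_ghatCoeff_mul_pow_le b h₁ h₂ h₃ hs)

theorem tsum_norm_ghatCoeff_mul_pow_le {b : ℕ → ℍ} {w₁ w₂ w₃ : ℍ} (h₁ : ‖w₁‖ ≤ 1)
    (h₂ : ‖w₂‖ ≤ 1) (h₃ : ‖w₃‖ ≤ 1) {s : ℝ} (hs : 0 ≤ s) (hb : Summable fun n => ‖b n‖ * s ^ n) :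
    ∑' n, ‖ghatCoeff b w₁ w₂ w₃ n‖ * s ^ n ≤ 8 * (∑' n, ‖b n‖ * s ^ n) ^ 3 := by
  have h := (hasSum_triple_cauchy_product (fun n => by positivity) hb).mul_left 8
  rw [← h.tsum_eq]
  exact (summable_norm_ghatCoeff_mul_pow h₁ h₂ h₃ hs hb).tsum_le_tsum
    (norm_ghatCoeff_mul_pow_le b h₁ h₂ h₃ hs) h.summable

theorem Real.rpow_one_div_three_le_iff {x y : ℝ} (hx : 0 ≤ x) (hy : 0 ≤ y) :
    x ^ ((1 : ℝ) / 3) ≤ y ↔ x ≤ y ^ 3 := by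
  rw [one_div, Real.rpow_inv_le_iff_of_pos hx hy three_pos]
  norm_cast

theorem norm_tsum_pow_mul_ghatCoeff_le {a : ℕ → ℍ} {R : ℝ}
    (ha : Summable fun n => ‖a n‖ * R ^ n) {w₁ w₂ w₃ z : ℍ} (h₁ : ‖w₁‖ ≤ 1) (h₂ : ‖w₂‖ ≤ 1)
    (h₃ : ‖w₃‖ ≤ 1) (hz : ‖z‖ ≤ R) :
    ‖∑' n, z ^ n * ghatCoeff (bseq a) w₁ w₂ w₃ n‖ ≤ 8 * (∑' n, ‖a n‖ * R ^ n) ^ 3 := by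
  have hR : 0 ≤ R := (norm_nonneg z).trans hz
  have hb : Summable fun n => ‖bseq a n‖ * R ^ n := by simpa only [norm_bseq] using ha
  have hc := summable_norm_ghatCoeff_mul_pow h₁ h₂ h₃ hR hb
  calc _ ≤ ∑' n, ‖z ^ n * ghatCoeff (bseq a) w₁ w₂ w₃ n‖ :=
        norm_tsum_le_tsum_norm (summable_norm_pow_mul_of_norm_le hc hz)
    _ ≤ ∑' n, ‖ghatCoeff (bseq a) w₁ w₂ w₃ n‖ * R ^ n :=
        (summable_norm_pow_mul_of_norm_le hc hz).tsum_le_tsum (fun n => by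
          rw [norm_mul, norm_pow, mul_comm]
          gcongr) hc
    _ ≤ 8 * (∑' n, ‖a n‖ * R ^ n) ^ 3 := by
        simpa only [norm_bseq] using tsum_norm_ghatCoeff_mul_pow_le h₁ h₂ h₃ hR hb

theorem sliceD3_nonneg (a : ℕ → ℍ) (r : ℝ) : 0 ≤ sliceD3 a r :=
  Real.sSup_nonneg <| by
    rintro x ⟨I, w₁, w₂, w₃, z, -, -, -, -, -, -, -, -, -, rfl⟩
    positivity

theorem norm_tsum_le_sliceD3_pow {a : ℕ → ℍ} {r R : ℝ} (ha : Summable fun n => ‖a n‖ * R ^ n)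
    (hrR : r ≤ R) {I w₁ w₂ w₃ z : ℍ} (hI : I ^ 2 = -1) (hw₁ : w₁ ∈ sliceL I) (h₁ : ‖w₁‖ ≤ 1)
    (hw₂ : w₂ ∈ sliceL I) (h₂ : ‖w₂‖ ≤ 1) (hw₃ : w₃ ∈ sliceL I) (h₃ : ‖w₃‖ ≤ 1)
    (hz : z ∈ sliceL I) (hzr : ‖z‖ ≤ r) :
    ‖∑' n, z ^ n * ghatCoeff (bseq a) w₁ w₂ w₃ n‖ ≤ sliceD3 a r ^ 3 := by
  have hbdd : BddAbove {x : ℝ | ∃ I w₁ w₂ w₃ z : ℍ, I ^ 2 = -1 ∧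
      w₁ ∈ sliceL I ∧ ‖w₁‖ ≤ 1 ∧ w₂ ∈ sliceL I ∧ ‖w₂‖ ≤ 1 ∧ w₃ ∈ sliceL I ∧ ‖w₃‖ ≤ 1 ∧
      z ∈ sliceL I ∧ ‖z‖ ≤ r ∧
      x = ‖∑' n : ℕ, z ^ n * ghatCoeff (bseq a) w₁ w₂ w₃ n‖ ^ ((1 : ℝ) / 3)} := by
    refine ⟨(8 * (∑' n, ‖a n‖ * R ^ n) ^ 3) ^ ((1 : ℝ) / 3), ?_⟩
    rintro x ⟨I, w₁, w₂, w₃, z, -, -, h₁, -, h₂, -, h₃, -, hzr, rfl⟩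
    exact Real.rpow_le_rpow (norm_nonneg _)
      (norm_tsum_pow_mul_ghatCoeff_le ha h₁ h₂ h₃ (hzr.trans hrR)) (by norm_num)
  rw [← Real.rpow_one_div_three_le_iff (norm_nonneg _) (sliceD3_nonneg a r)]
  exact le_csSup hbdd ⟨I, w₁, w₂, w₃, z, hI, hw₁, h₁, hw₂, h₂, hw₃, h₃, hz, hzr, rfl⟩

theorem sliceD3_le_div_mul_sliceD3 {a : ℕ → ℍ} {r ρ R : ℝ} (hr : 0 < r) (hrρ : r ≤ ρ)
    (hρR : ρ < R) (ha : Summable fun n => ‖a n‖ * R ^ n) :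
    sliceD3 a r ≤ r / ρ * sliceD3 a ρ := by
  have hρ : 0 < ρ := hr.trans_le hrρ
  refine Real.sSup_le ?_ (mul_nonneg (by positivity) (sliceD3_nonneg a ρ))
  rintro x ⟨I, w₁, w₂, w₃, z, hI, hw₁, h₁, hw₂, h₂, hw₃, h₃, hz, hzr, rfl⟩
  have hc : Summable fun n => ‖ghatCoeff (bseq a) w₁ w₂ w₃ n‖ * R ^ n :=
    summable_norm_ghatCoeff_mul_pow h₁ h₂ h₃ (hρ.trans hρR).le (by simpa only [norm_bseq] using ha)
  have hc3 : ∀ n < 3, ghatCoeff (bseq a) w₁ w₂ w₃ n = 0 := fun n hn =>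
    ghatCoeff_eq_zero_of_lt_three _ _ _ _ hn
  obtain ⟨z', hz', hz'ρ, hle⟩ := exists_mem_sliceL_norm_eq_pow_mul_norm_tsum_le hI hc3 hρ hρR hc
    hz (hzr.trans hrρ)
  have hz'le := norm_tsum_le_sliceD3_pow ha hρR.le hI hw₁ h₁ hw₂ h₂ hw₃ h₃ hz' hz'ρ.le
  have hzc := summable_norm_pow_mul_of_norm_le hc (by linarith : ‖z‖ ≤ R)
  rw [Real.rpow_one_div_three_le_iff (norm_nonneg _)
      (mul_nonneg (by positivity) (sliceD3_nonneg a ρ)),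
    tsum_pow_mul_eq_pow_mul_tsum hc3 hzc.of_norm, norm_mul, norm_pow]
  calc _ ≤ r ^ 3 * ‖∑' n, z ^ n * ghatCoeff (bseq a) w₁ w₂ w₃ (n + 3)‖ := by gcongr
    _ = (r / ρ) ^ 3 * (ρ ^ 3 * ‖∑' n, z ^ n * ghatCoeff (bseq a) w₁ w₂ w₃ (n + 3)‖) := by
        field_simp
    _ ≤ (r / ρ) ^ 3 * sliceD3 a ρ ^ 3 := by gcongr; exact hle.trans hz'le
    _ = (r / ρ * sliceD3 a ρ) ^ 3 := by ring

theorem sliceD3_le_mul_of_tendsto {a : ℕ → ℍ}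
    (hconv : ∀ ρ : ℝ, 0 ≤ ρ → ρ < 1 → Summable fun n : ℕ => ‖a n‖ * ρ ^ n) {L : ℝ}
    (hd : Tendsto (sliceD3 a) (nhdsWithin 1 (Set.Iio 1)) (nhds L)) {r : ℝ}
    (hr : r ∈ Set.Ioo (0 : ℝ) 1) : sliceD3 a r ≤ L * r := by
  have hlim : Tendsto (fun ρ => r / ρ * sliceD3 a ρ) (nhdsWithin 1 (Set.Iio 1))
      (nhds (r / 1 * L)) :=
    ((tendsto_const_nhds.div tendsto_id one_ne_zero).mono_left nhdsWithin_le_nhds).mul hd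
  rw [div_one, mul_comm] at hlim
  refine ge_of_tendsto hlim ?_
  filter_upwards [Ioo_mem_nhdsLT hr.2] with ρ hρ
  exact sliceD3_le_div_mul_sliceD3 hr.1 hρ.1.le (by linarith [hρ.2] : ρ < (ρ + 1) / 2)
    (hconv _ (by linarith [hr.1, hρ.1]) (by linarith [hρ.2]))

theorem exists_mem_sliceL_norm_mul_sub_eq {I : ℍ} (hI : I ^ 2 = -1) :
    ∃ w₁ w₂ w₃ : ℍ, w₁ ∈ sliceL I ∧ ‖w₁‖ ≤ 1 ∧ w₂ ∈ sliceL I ∧ ‖w₂‖ ≤ 1 ∧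
      w₃ ∈ sliceL I ∧ ‖w₃‖ ≤ 1 ∧ ‖(w₂ - w₁) * (w₃ - w₁) * (w₃ - w₂)‖ = √3 ^ 3 := by
  have h3 : √3 ^ 2 = 3 := Real.sq_sqrt (by norm_num)
  let ω : ℂ := ⟨-1 / 2, √3 / 2⟩
  have hω : ‖ω‖ = 1 := by
    rw [Complex.norm_eq_sqrt_sq_add_sq, Real.sqrt_eq_one]
    simp only [ω, div_pow, h3]
    norm_num
  have hprod : (ω - 1) * (starRingEnd ℂ ω - 1) * (starRingEnd ℂ ω - ω) = ⟨0, -√3 ^ 3⟩ := by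
    apply Complex.ext <;>
      simp only [ω, Complex.mul_re, Complex.mul_im, Complex.sub_re, Complex.sub_im,
        Complex.one_re, Complex.one_im, Complex.conj_re, Complex.conj_im]
    · ring
    · linear_combination (3 / 4 * √3) * h3
  have hmem : ∀ w, sliceEmbedding I hI w ∈ sliceL I := fun w =>
    range_sliceEmbedding hI ▸ Set.mem_range_self w
  refine ⟨sliceEmbedding I hI 1, sliceEmbedding I hI ω, sliceEmbedding I hI (starRingEnd ℂ ω),
    hmem _, by rw [norm_sliceEmbedding, norm_one], hmem _, by rw [norm_sliceEmbedding, hω],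
    hmem _, by rw [norm_sliceEmbedding, Complex.norm_conj, hω], ?_⟩
  rw [← map_sub, ← map_sub, ← map_sub, ← map_mul, ← map_mul, norm_sliceEmbedding, hprod,
    Complex.norm_eq_sqrt_sq_add_sq]
  simp

theorem sqrt_three_mul_norm_mul_le_sliceD3 {a : ℕ → ℍ} {ρ R : ℝ} (hρ : 0 < ρ) (hρR : ρ < R)
    (ha : Summable fun n => ‖a n‖ * R ^ n) : √3 * ‖a 1‖ * ρ ≤ sliceD3 a ρ := by
  obtain ⟨I, hI⟩ : ∃ I : ℍ, I ^ 2 = -1 :=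
    ⟨⟨0, 1, 0, 0⟩, (Quaternion.sq_eq_neg_normSq.2 rfl).trans (by norm_num [Quaternion.normSq])⟩
  obtain ⟨w₁, w₂, w₃, hw₁, h₁, hw₂, h₂, hw₃, h₃, hvol⟩ := exists_mem_sliceL_norm_mul_sub_eq hI
  have hc : Summable fun n => ‖ghatCoeff (bseq a) w₁ w₂ w₃ n‖ * R ^ n :=
    summable_norm_ghatCoeff_mul_pow h₁ h₂ h₃ (hρ.trans hρR).le (by simpa only [norm_bseq] using ha)
  obtain ⟨z, hz, hzρ, hle⟩ := exists_mem_sliceL_norm_eq_pow_mul_norm_tsum_le hI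
    (fun n hn => ghatCoeff_eq_zero_of_lt_three _ _ _ _ hn) hρ hρR hc (u := 0) ⟨0, 0, by simp⟩
    (by simpa using hρ.le)
  have hzle := norm_tsum_le_sliceD3_pow ha hρR.le hI hw₁ h₁ hw₂ h₂ hw₃ h₃ hz hzρ.le
  rw [tsum_eq_single 0 fun n hn => by simp [hn], pow_zero, one_mul, zero_add, ghatCoeff_three,
    norm_mul, hvol, norm_mul, norm_mul, norm_bseq] at hle
  refine le_of_pow_le_pow_left₀ three_ne_zero (sliceD3_nonneg a ρ) ?_
  calc (√3 * ‖a 1‖ * ρ) ^ 3 = ρ ^ 3 * (√3 ^ 3 * (‖a 1‖ * ‖a 1‖ * ‖a 1‖)) := by ring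
    _ ≤ sliceD3 a ρ ^ 3 := hle.trans hzle

/-- Landau–Toeplitz theorem for the slice `3`-diameter, inequality part. -/
theorem landau_toeplitz_sliceD3_ineq (a : ℕ → ℍ)
    (hconv : ∀ ρ : ℝ, 0 ≤ ρ → ρ < 1 → Summable fun n : ℕ => ‖a n‖ * ρ ^ n)
    (hd : Tendsto (sliceD3 a) (nhdsWithin 1 (Set.Iio 1)) (nhds (Real.sqrt 3))) :
    (∀ r ∈ Set.Ioo (0 : ℝ) 1, sliceD3 a r ≤ Real.sqrt 3 * r) ∧ ‖a 1‖ ≤ 1 := by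
  have hle : ∀ r ∈ Set.Ioo (0 : ℝ) 1, sliceD3 a r ≤ Real.sqrt 3 * r := fun r hr =>
    sliceD3_le_mul_of_tendsto hconv hd hr
  refine ⟨hle, ?_⟩
  have h := (sqrt_three_mul_norm_mul_le_sliceD3 (ρ := 1 / 2) (R := 3 / 4) (by norm_num)
    (by norm_num) (hconv _ (by norm_num) (by norm_num))).trans (hle _ ⟨by norm_num, by norm_num⟩)
  have hs : 0 < √3 / 2 := by positivity
  nlinarith
end
end

section
/- Given an integer n ≥ 2 and n points w₁, …, w_n in the closed unit disc 𝔻̄ = {z ∈ ℂ : |z| ≤ 1}, equality ∏_{1≤j<k≤n} |w_j − w_k| = n^{n/2} holds if and only if there exist u ∈ ℂ with |u| = 1 and a permutation σ of {1, …, n} such that w_{σ(j)} = u·e^{2πij/n} for every j = 1, …, n (i.e., after relabeling, the points form a rotated complete set of n-th roots of unity). -/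
/-!
Let `V` be the Vandermonde matrix of the points, so that `|det V|` is the product of the mutual
distances and the Gram matrix `G = V Vᴴ`, with entries `G a b = ∑_{k<n} (w_a * conj w_b)^k`,
has `det G = |det V|²`. Since `G` is positive semidefinite with diagonal entries
`∑_{k<n} |w_a|^{2k} ≤ n`, AM–GM on its eigenvalues gives `det G ≤ (tr G / n)^n ≤ n^n`, with
equality iff `G = n • 1`. Reading this entrywise, equality means that the points lie on the unit
circle, are distinct, and have `n`-th roots of unity as pairwise ratios: after relabeling they are
`u, uζ, …, uζ^{n-1}` for a primitive `n`-th root of unity `ζ`.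
-/

open Finset ComplexConjugate

namespace Real

theorem le_mul_exp_div_sub_one {c : ℝ} (hc : 0 < c) (x : ℝ) : x ≤ c * exp (x / c - 1) := by
  calc x = c * (x / c - 1 + 1) := by field_simp; ring
    _ ≤ c * exp (x / c - 1) := by gcongr; exact add_one_le_exp _

theorem lt_mul_exp_div_sub_one {c x : ℝ} (hc : 0 < c) (hx : x ≠ c) : x < c * exp (x / c - 1) := by
  have hx' : x / c - 1 ≠ 0 := by
    rwa [sub_ne_zero, ne_eq, div_eq_one_iff_eq hc.ne']
  calc x = c * (x / c - 1 + 1) := by field_simp; ring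
    _ < c * exp (x / c - 1) := by gcongr; exact add_one_lt_exp hx'

end Real

-- Equality case of AM–GM: multiplying the tangent-line bounds `l i ≤ c * exp (l i / c - 1)` gives
-- `∏ l ≤ c ^ card ι * exp (∑ l / c - card ι) ≤ c ^ card ι`, strictly if some `l i ≠ c`.
theorem eq_of_prod_eq_pow_of_sum_le {ι : Type*} [Fintype ι] {l : ι → ℝ} {c : ℝ} (hc : 0 < c)
    (hl : ∀ i, 0 ≤ l i) (hsum : ∑ i, l i ≤ Fintype.card ι * c)
    (hprod : ∏ i, l i = c ^ Fintype.card ι) (i : ι) : l i = c := by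
  by_contra hi
  have hpos : ∀ j, 0 < l j := fun j => (hl j).lt_of_ne fun h =>
    (pow_pos hc _).ne' (hprod ▸ prod_eq_zero (mem_univ j) h.symm)
  have hexp : ∑ j, (l j / c - 1) ≤ 0 := by
    rw [sum_sub_distrib, ← sum_div, sum_const, card_univ, nsmul_one, sub_nonpos,
      div_le_iff₀ hc]
    exact hsum
  have := calc c ^ Fintype.card ι = ∏ j, l j := hprod.symm
    _ < ∏ j, c * Real.exp (l j / c - 1) :=
      prod_lt_prod (fun j _ => hpos j) (fun j _ => Real.le_mul_exp_div_sub_one hc _)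
        ⟨i, mem_univ i, Real.lt_mul_exp_div_sub_one hc hi⟩
    _ = c ^ Fintype.card ι * Real.exp (∑ j, (l j / c - 1)) := by
      rw [prod_mul_distrib, prod_const, Real.exp_sum, card_univ]
    _ ≤ c ^ Fintype.card ι := by
      apply mul_le_of_le_one_right (by positivity)
      exact Real.exp_le_one_iff.mpr hexp
  exact lt_irrefl _ this

theorem Finset.prod_filter_fst_lt_snd {α M : Type*} [Fintype α] [LinearOrder α]
    [LocallyFiniteOrderTop α] [CommMonoid M] (f : α → α → M) :
    ∏ p ∈ univ.filter (fun p : α × α => p.1 < p.2), f p.1 p.2 = ∏ i, ∏ j ∈ Ioi i, f i j := by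
  rw [prod_sigma']
  exact prod_bij' (fun p _ => ⟨p.1, p.2⟩) (fun p _ => (p.1, p.2))
    (by simp) (by simp) (by simp) (by simp) (by simp)

theorem geom_sum_eq_zero_iff_pow_eq_one {K : Type*} [DivisionRing K] {x : K} (hx : x ≠ 1)
    (n : ℕ) : ∑ k ∈ range n, x ^ k = 0 ↔ x ^ n = 1 := by
  rw [geom_sum_eq hx, div_eq_zero_iff, sub_eq_zero, or_iff_left (sub_ne_zero.2 hx)]

variable {𝕜 : Type*} [RCLike 𝕜]

theorem norm_geom_sum_le_of_norm_le_one {z : 𝕜} (hz : ‖z‖ ≤ 1) (n : ℕ) :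
    ‖∑ k ∈ range n, z ^ k‖ ≤ n := by
  calc ‖∑ k ∈ range n, z ^ k‖ ≤ ∑ k ∈ range n, ‖z‖ ^ k := by
        simpa only [norm_pow] using norm_sum_le (range n) (z ^ ·)
    _ ≤ ∑ _k ∈ range n, (1 : ℝ) := sum_le_sum fun k _ => pow_le_one₀ (norm_nonneg z) hz
    _ = n := by simp

theorem norm_geom_sum_lt_of_norm_lt_one {z : 𝕜} (hz : ‖z‖ < 1) {n : ℕ} (hn : 2 ≤ n) :
    ‖∑ k ∈ range n, z ^ k‖ < n := by
  calc ‖∑ k ∈ range n, z ^ k‖ ≤ ∑ k ∈ range n, ‖z‖ ^ k := by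
        simpa only [norm_pow] using norm_sum_le (range n) (z ^ ·)
    _ < ∑ _k ∈ range n, (1 : ℝ) :=
      sum_lt_sum (fun k _ => pow_le_one₀ (norm_nonneg z) hz.le)
        ⟨1, mem_range.2 hn, by simpa using hz⟩
    _ = n := by simp

theorem RCLike.mul_conj_eq_one_iff {x y : 𝕜} (hy : ‖y‖ = 1) : x * conj y = 1 ↔ x = y := by
  rw [← RCLike.inv_eq_conj hy, mul_inv_eq_one₀ (norm_ne_zero_iff.1 (hy ▸ one_ne_zero))]

open Matrix ComplexOrder in
theorem Matrix.PosSemidef.eq_smul_one_of_det_eq_of_re_trace_le {ι : Type*} [Fintype ι]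
    [DecidableEq ι] {A : Matrix ι ι 𝕜} (hA : A.PosSemidef) {c : ℝ} (hc : 0 < c)
    (htr : RCLike.re A.trace ≤ Fintype.card ι * c) (hdet : A.det = (c : 𝕜) ^ Fintype.card ι) :
    A = (c : 𝕜) • 1 := by
  have hH := hA.isHermitian
  have heig : ∀ i, hH.eigenvalues i = c := by
    refine eq_of_prod_eq_pow_of_sum_le hc hA.eigenvalues_nonneg ?_ ?_
    · simpa [hH.trace_eq_sum_eigenvalues] using htr
    · rw [hH.det_eq_prod_eigenvalues] at hdet
      exact_mod_cast hdet
  have hdiag : diagonal (RCLike.ofReal ∘ hH.eigenvalues) = (c : 𝕜) • (1 : Matrix ι ι 𝕜) := by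
    rw [smul_one_eq_diagonal]
    congr 1
    ext i
    simp [heig]
  rw [hH.spectral_theorem, hdiag, map_smul, map_one]

namespace Matrix

theorem norm_det_vandermonde {K : Type*} [NormedField K] {n : ℕ} (w : Fin n → K) :
    ‖(vandermonde w).det‖ =
      ∏ p ∈ univ.filter (fun p : Fin n × Fin n => p.1 < p.2), ‖w p.1 - w p.2‖ := by
  simp only [det_vandermonde, norm_prod, prod_filter_fst_lt_snd fun i j => ‖w i - w j‖,
    norm_sub_rev]

theorem det_mul_conjTranspose_self {ι : Type*} [Fintype ι] [DecidableEq ι] (A : Matrix ι ι 𝕜) :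
    (A * Aᴴ).det = (‖A.det‖ : 𝕜) ^ 2 := by
  rw [det_mul, det_conjTranspose, RCLike.star_def, RCLike.mul_conj]

theorem vandermonde_mul_conjTranspose_apply {n : ℕ} (w : Fin n → 𝕜) (a b : Fin n) :
    (vandermonde w * (vandermonde w)ᴴ) a b = ∑ k ∈ range n, (w a * conj (w b)) ^ k := by
  simp [mul_apply, mul_pow, Fin.sum_univ_eq_sum_range (fun k => w a ^ k * conj (w b) ^ k)]

variable {n : ℕ} {w : Fin n → 𝕜}

theorem re_trace_vandermonde_mul_conjTranspose_le (hw : ∀ i, ‖w i‖ ≤ 1) :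
    RCLike.re (vandermonde w * (vandermonde w)ᴴ).trace ≤ n * n := by
  have hdiag : ∀ a, ‖(vandermonde w * (vandermonde w)ᴴ) a a‖ ≤ n := fun a => by
    rw [vandermonde_mul_conjTranspose_apply]
    refine norm_geom_sum_le_of_norm_le_one ?_ n
    rw [norm_mul, RCLike.norm_conj]
    exact mul_le_one₀ (hw a) (norm_nonneg _) (hw a)
  calc RCLike.re (vandermonde w * (vandermonde w)ᴴ).trace
      = ∑ a, RCLike.re ((vandermonde w * (vandermonde w)ᴴ) a a) := map_sum _ _ _
    _ ≤ ∑ _a : Fin n, (n : ℝ) := sum_le_sum fun a _ => (RCLike.re_le_norm _).trans (hdiag a)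
    _ = n * n := by simp

open scoped ComplexOrder in
theorem norm_det_vandermonde_eq_iff (hn : n ≠ 0) (hw : ∀ i, ‖w i‖ ≤ 1) :
    ‖(vandermonde w).det‖ = (n : ℝ) ^ ((n : ℝ) / 2) ↔
      vandermonde w * (vandermonde w)ᴴ = (n : 𝕜) • 1 := by
  have hpow : ((n : ℝ) ^ ((n : ℝ) / 2)) ^ 2 = (n : ℝ) ^ n := by
    rw [← Real.rpow_natCast _ 2, ← Real.rpow_mul (Nat.cast_nonneg n)]
    norm_num
  rw [← pow_left_inj₀ (norm_nonneg _) (by positivity) two_ne_zero, hpow]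
  constructor
  · intro h
    have := (posSemidef_self_mul_conjTranspose (vandermonde w)).eq_smul_one_of_det_eq_of_re_trace_le
      (c := n) (by positivity) (by simpa using re_trace_vandermonde_mul_conjTranspose_le hw)
      (by rw [det_mul_conjTranspose_self, Fintype.card_fin]; exact_mod_cast h)
    simpa using this
  · intro h
    have := det_mul_conjTranspose_self (vandermonde w)
    rw [h, det_smul, det_one, mul_one, Fintype.card_fin] at this
    exact_mod_cast this.symm

theorem vandermonde_mul_conjTranspose_eq_smul_one_iff (hn : 2 ≤ n) (hw : ∀ i, ‖w i‖ ≤ 1) :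
    vandermonde w * (vandermonde w)ᴴ = (n : 𝕜) • 1 ↔
      (∀ a, ‖w a‖ = 1) ∧ Function.Injective w ∧ ∀ a b, (w a * conj (w b)) ^ n = 1 := by
  have hn0 : (n : 𝕜) ≠ 0 := Nat.cast_ne_zero.2 (by omega)
  constructor
  · intro hG
    have hentry : ∀ a b, ∑ k ∈ range n, (w a * conj (w b)) ^ k = if a = b then (n : 𝕜) else 0 :=
      fun a b => by
        rw [← vandermonde_mul_conjTranspose_apply, hG]
        simp [one_apply]
    have hunit : ∀ a, ‖w a‖ = 1 := fun a => by
      by_contra ha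
      have hlt : ‖w a * conj (w a)‖ < 1 := by
        rw [norm_mul, RCLike.norm_conj]
        exact mul_lt_one_of_nonneg_of_lt_one_left (norm_nonneg _) (lt_of_le_of_ne (hw a) ha) (hw a)
      have := norm_geom_sum_lt_of_norm_lt_one hlt hn
      rw [hentry, if_pos rfl, RCLike.norm_natCast] at this
      exact lt_irrefl _ this
    have hone : ∀ a b, w a * conj (w b) = 1 ↔ w a = w b := fun a b =>
      RCLike.mul_conj_eq_one_iff (hunit b)
    have hoff : ∀ a b, a ≠ b → w a * conj (w b) ≠ 1 := fun a b hab h1 => by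
      simpa [h1, hab, hn0] using hentry a b
    refine ⟨hunit, fun a b hab => by_contra fun hne => hoff a b hne ((hone a b).2 hab),
      fun a b => ?_⟩
    by_cases hab : a = b
    · rw [(hone a b).2 (congrArg w hab), one_pow]
    · exact (geom_sum_eq_zero_iff_pow_eq_one (hoff a b hab) n).1 (by simpa [hab] using hentry a b)
  · rintro ⟨hunit, hinj, hpow⟩
    ext a b
    rw [vandermonde_mul_conjTranspose_apply]
    by_cases hab : a = b
    · subst hab
      simp [(RCLike.mul_conj_eq_one_iff (hunit a)).2 rfl]
    · have hne : w a * conj (w b) ≠ 1 := fun h =>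
        hab (hinj ((RCLike.mul_conj_eq_one_iff (hunit b)).1 h))
      simp [(geom_sum_eq_zero_iff_pow_eq_one hne n).2 (hpow a b), hab]

end Matrix

theorem IsPrimitiveRoot.exists_perm_eq_mul_pow_iff {n : ℕ} [NeZero n] {ζ : ℂ}
    (hζ : IsPrimitiveRoot ζ n) {w : Fin n → ℂ} :
    ((∀ a, ‖w a‖ = 1) ∧ Function.Injective w ∧ ∀ a b, (w a * conj (w b)) ^ n = 1) ↔
      ∃ (u : ℂ) (σ : Equiv.Perm (Fin n)), ‖u‖ = 1 ∧ ∀ j : Fin n, w (σ j) = u * ζ ^ (j : ℕ) := by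
  constructor
  · rintro ⟨hunit, hinj, hpow⟩
    have hconj : conj (w 0) ≠ 0 := by simp [← norm_ne_zero_iff, hunit 0]
    have hroot : ∀ a, ∃ j : Fin n, ζ ^ (j : ℕ) = w a * conj (w 0) := fun a => by
      obtain ⟨i, hi, h⟩ := hζ.eq_pow_of_pow_eq_one (hpow a 0)
      exact ⟨⟨i, hi⟩, h⟩
    choose τ hτ using hroot
    have hτ_inj : Function.Injective τ := fun a b h =>
      hinj (mul_right_cancel₀ hconj ((hτ a).symm.trans (h ▸ hτ b)))
    let e := Equiv.ofBijective τ hτ_inj.bijective_of_finite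
    refine ⟨w 0, e.symm, hunit 0, fun j => ?_⟩
    have hj : ζ ^ (j : ℕ) = w (e.symm j) * conj (w 0) := by
      simpa only [e, Equiv.ofBijective_apply_symm_apply] using hτ (e.symm j)
    rw [hj, mul_left_comm, RCLike.mul_conj, hunit 0]
    simp
  · rintro ⟨u, σ, hu, hw⟩
    have hwa : ∀ a, w a = u * ζ ^ (σ.symm a : ℕ) := fun a => by simpa using hw (σ.symm a)
    have hwpow : ∀ a, w a ^ n = u ^ n := fun a => by
      rw [hwa, mul_pow, ← pow_mul, mul_comm _ n, pow_mul, hζ.pow_eq_one, one_pow, mul_one]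
    have hu0 : u ≠ 0 := by simp [← norm_ne_zero_iff, hu]
    refine ⟨fun a => by simp [hwa, hu, hζ.norm'_eq_one (NeZero.ne n)], fun a b h => ?_,
      fun a b => ?_⟩
    · rw [hwa, hwa, mul_right_inj' hu0] at h
      exact σ.symm.injective (Fin.ext (hζ.pow_inj (σ.symm a).isLt (σ.symm b).isLt h))
    · rw [mul_pow, ← map_pow, hwpow, hwpow, RCLike.mul_conj, norm_pow, hu]
      simp

/-- For `n ≥ 2` points `w₁, …, w_n` in the closed unit disc of `ℂ`, equality
`∏_{1 ≤ j < k ≤ n} |w_j − w_k| = n^{n/2}` holds if and only if, after relabeling,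
the points form a rotated complete set of `n`-th roots of unity: there are `u ∈ ℂ`
with `|u| = 1` and a permutation `σ` of the indices with
`w_{σ(j)} = u · e^{2πij/n}` for every `j`. -/
theorem prod_dist_eq_pow_iff (n : ℕ) (hn : 2 ≤ n) (w : Fin n → ℂ)
    (hw : ∀ i, ‖w i‖ ≤ 1) :
    (∏ p ∈ Finset.univ.filter (fun p : Fin n × Fin n => p.1 < p.2),
        ‖w p.1 - w p.2‖) = (n : ℝ) ^ ((n : ℝ) / 2) ↔
      ∃ (u : ℂ) (σ : Equiv.Perm (Fin n)), ‖u‖ = 1 ∧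
        ∀ j : Fin n, w (σ j) =
          u * Complex.exp (2 * Real.pi * Complex.I * ((j : ℕ) : ℂ) / (n : ℂ)) := by
  have : NeZero n := ⟨by omega⟩
  have hexp : ∀ j : ℕ, Complex.exp (2 * Real.pi * Complex.I * j / n) =
      Complex.exp (2 * Real.pi * Complex.I / n) ^ j := fun j => by
    rw [← Complex.exp_nat_mul]
    ring_nf
  simp only [hexp]
  rw [← Matrix.norm_det_vandermonde, Matrix.norm_det_vandermonde_eq_iff (by omega) hw,
    Matrix.vandermonde_mul_conjTranspose_eq_smul_one_iff hn hw,
    (Complex.isPrimitiveRoot_exp n (by omega)).exists_perm_eq_mul_pow_iff]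
end
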